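/- Let R_n be the strictly increasing enumeration of the records of the walk S_n(√2) (so R_0 = 0 and R_1 = 1). Then R_{n+1} = 2R_n + R_{n-1} + 1 for all n ≥ 1, and the values at consecutive records have alternating signs: for every n ≥ 1, (−1)^n · S_{R_n}(√2) > 0. -/
import Mathlib


/-- The deterministic random walk `S_n(ξ) = ∑_{j=1}^n (-1)^⌊j·ξ⌋`. -/
noncomputable def S (ξ : ℝ) (n : ℕ) : ℤ :=
  ∑ j ∈ Finset.Icc 1 n, ((Int.negOnePow ⌊(j : ℝ) * ξ⌋ : ℤˣ) : ℤ)

/-- An index `r` is a record of the walk `S_n(ξ)` if no earlier partial sum equals `S_r(ξ)`. -/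
def IsRecord (ξ : ℝ) (r : ℕ) : Prop :=
  ∀ m < r, S ξ m ≠ S ξ r

/-- `R n` is the strictly increasing enumeration of the records of `S_n(√2)`. -/
noncomputable def R (n : ℕ) : ℕ :=
  Nat.nth (IsRecord (Real.sqrt 2)) n

open Finset Real

namespace Stmt4Aux

noncomputable abbrev rt : ℝ := Real.sqrt 2

lemma rt_sq : rt ^ 2 = 2 := Real.sq_sqrt (by norm_num)
lemma rt_pos : 0 < rt := Real.sqrt_pos.mpr (by norm_num)
lemma rt_lt : rt < 3/2 := by nlinarith [rt_sq, rt_pos]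
lemma rt_gt : 1.41 < rt := by nlinarith [rt_sq, rt_pos]

/-- Pell denominators 1,2,5,12,29,... -/
def q : ℕ → ℕ
  | 0 => 1
  | 1 => 2
  | (n+2) => 2 * q (n+1) + q n

/-- Pell numerators 1,3,7,17,41,... -/
def pp : ℕ → ℕ
  | 0 => 1
  | 1 => 3
  | (n+2) => 2 * pp (n+1) + pp n

lemma q_pos (n : ℕ) : 0 < q n := by
  induction n using Nat.twoStepInduction with
  | zero => simp [q]
  | one => simp [q]
  | more n ih1 ih2 => simp [q]; omega

lemma q_lt_succ (n : ℕ) : q n < q (n+1) := by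
  induction n using Nat.twoStepInduction with
  | zero => simp [q]
  | one => simp [q]
  | more n ih1 ih2 =>
    show q (n+2) < 2 * q (n+2) + q (n+1)
    have := q_pos (n+2); have := q_pos (n+1); omega

lemma pp_odd (n : ℕ) : Odd (pp n) := by
  induction n using Nat.twoStepInduction with
  | zero => exact ⟨0, rfl⟩
  | one => exact ⟨1, rfl⟩
  | more n ih1 ih2 =>
    obtain ⟨a, ha⟩ := ih1
    exact ⟨pp (n+1) + a, by simp [pp]; omega⟩

/-- determinant -/
lemma det (n : ℕ) : (q (n+1) : ℤ) * pp n - pp (n+1) * q n = (-1)^(n+1) := by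
  induction n with
  | zero => simp [q, pp]
  | succ n ih =>
    have hq : (q (n+2) : ℤ) = 2 * q (n+1) + q n := by rw [show q (n+2) = 2*q (n+1) + q n from rfl]; push_cast; ring
    have hp : (pp (n+2) : ℤ) = 2 * pp (n+1) + pp n := by rw [show pp (n+2) = 2*pp (n+1) + pp n from rfl]; push_cast; ring
    rw [hq, hp]; ring_nf; ring_nf at ih; linear_combination -ih

/-- the small quantity δ_k = q k √2 - p k -/
noncomputable def dl (n : ℕ) : ℝ := q n * rt - pp n

lemma dl_eq (n : ℕ) : dl n = (-1)^n * (rt - 1)^(n+1) := by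
  induction n using Nat.twoStepInduction with
  | zero => simp [dl, q, pp]
  | one =>
    simp only [dl, q, pp]
    push_cast
    have := rt_sq
    ring_nf
    nlinarith [rt_sq]
  | more n ih1 ih2 =>
    have hq : (q (n+2) : ℝ) = 2 * q (n+1) + q n := by
      rw [show q (n+2) = 2*q (n+1) + q n from rfl]; push_cast; ring
    have hp : (pp (n+2) : ℝ) = 2 * pp (n+1) + pp n := by
      rw [show pp (n+2) = 2*pp (n+1) + pp n from rfl]; push_cast; ring
    have h2 : dl (n+2) = 2 * dl (n+1) + dl n := by
      simp only [dl, hq, hp]; ring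
    rw [h2, ih1, ih2]
    have : (rt-1)^(n+3) = (rt-1)^(n+1) * (rt-1)^2 := by ring
    rw [this]
    have h3 : (rt-1)^2 = 3 - 2*rt := by nlinarith [rt_sq]
    rw [h3]; ring


lemma u_pos (k : ℕ) : 0 < (rt - 1)^(k+1) := pow_pos (by nlinarith [rt_gt]) _

lemma u_lt_half (k : ℕ) : (rt - 1)^(k+1) < 1/2 := by
  have h1 : rt - 1 < 1/2 := by nlinarith [rt_lt]
  have h0 : 0 < rt - 1 := by nlinarith [rt_gt]
  calc (rt-1)^(k+1) ≤ (rt-1)^1 := by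
        apply pow_le_pow_of_le_one (le_of_lt h0) (by nlinarith) (by omega)
      _ < 1/2 := by simpa using h1

lemma u_succ (k : ℕ) : (rt-1)^(k+1) = (rt+1) * (rt-1)^(k+2) := by
  have : (rt+1)*(rt-1) = 1 := by nlinarith [rt_sq]
  calc (rt-1)^(k+1) = ((rt+1)*(rt-1)) * (rt-1)^(k+1) := by rw [this]; ring
    _ = (rt+1) * (rt-1)^(k+2) := by ring

/-- Key diophantine lemma -/
lemma key (k : ℕ) {j : ℕ} {p : ℤ} (h1 : 1 ≤ j) (h2 : j < q (k+1))
    (h : |(j:ℝ) * rt - p| ≤ (rt - 1)^(k+1)) : j = q k ∧ p = pp k := by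
  induction k with
  | zero =>
    have hj : j = 1 := by simp [q] at h2; omega
    subst hj
    refine ⟨rfl, ?_⟩
    rw [abs_le] at h
    have hgt := rt_gt; have hlt := rt_lt
    have e1 : (1:ℝ) ≤ p := by push_cast at h; nlinarith
    have e2 : (p:ℝ) < 2 := by push_cast at h; nlinarith
    have e1' : (1:ℤ) ≤ p := by exact_mod_cast e1
    have e2' : p < 2 := by exact_mod_cast e2
    show p = (pp 0 : ℤ)
    simp [pp]; omega
  | succ k _ =>
    have hdet := det k
    have he2 : ((-1:ℤ))^k * ((-1:ℤ))^k = 1 := by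
      rw [← pow_add]; exact Even.neg_one_pow ⟨k, by ring⟩
    obtain ⟨a, ha⟩ : ∃ a : ℤ, a = (-1)^(k+1) * ((j : ℤ) * pp k - p * q k) := ⟨_, rfl⟩
    obtain ⟨b, hb⟩ : ∃ b : ℤ, b = (-1)^(k+1) * ((q (k+1) : ℤ) * p - pp (k+1) * j) := ⟨_, rfl⟩
    have hj : (j : ℤ) = a * q (k+1) + b * q k := by
      rw [ha, hb]
      first
      | linear_combination ((-1:ℤ))^k * (j:ℤ) * hdet + (j:ℤ) * he2
      | linear_combination (-((-1:ℤ))^k * (j:ℤ)) * hdet + (j:ℤ) * he2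
      | linear_combination ((-1:ℤ))^k * (j:ℤ) * hdet - (j:ℤ) * he2
      | linear_combination (-((-1:ℤ))^k * (j:ℤ)) * hdet - (j:ℤ) * he2
    have hp : (p : ℤ) = a * pp (k+1) + b * pp k := by
      rw [ha, hb]
      first
      | linear_combination ((-1:ℤ))^k * (p:ℤ) * hdet + (p:ℤ) * he2
      | linear_combination (-((-1:ℤ))^k * (p:ℤ)) * hdet + (p:ℤ) * he2
      | linear_combination ((-1:ℤ))^k * (p:ℤ) * hdet - (p:ℤ) * he2
      | linear_combination (-((-1:ℤ))^k * (p:ℤ)) * hdet - (p:ℤ) * he2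
    have hjr : (j : ℝ) = (a:ℝ) * q (k+1) + (b:ℝ) * q k := by exact_mod_cast congrArg (Int.cast : ℤ → ℝ) hj
    have hpr : (p : ℝ) = (a:ℝ) * pp (k+1) + (b:ℝ) * pp k := by exact_mod_cast congrArg (Int.cast : ℤ → ℝ) hp
    have htheta : (j:ℝ) * rt - p = a * dl (k+1) + b * dl k := by
      simp only [dl]; rw [hjr, hpr]; ring
    set u : ℝ := (rt-1)^(k+1+1) with hu
    have hupos : 0 < u := u_pos (k+1)
    have hdl1 : dl (k+1) = (-1:ℝ)^(k+1) * u := dl_eq (k+1)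
    have hdl0 : dl k = (-1:ℝ)^k * ((rt+1) * u) := by
      rw [dl_eq k, hu, u_succ k]
    have hth2 : (j:ℝ) * rt - p = (-1:ℝ)^(k+1) * u * ((a:ℝ) - b * (rt+1)) := by
      rw [htheta, hdl1, hdl0]
      have hneg : (-1:ℝ)^k = -(-1:ℝ)^(k+1) := by rw [pow_succ]; ring
      rw [hneg]; ring
    have habs : |(a:ℝ) - b * (rt+1)| ≤ 1 := by
      have h' : |(j:ℝ) * rt - p| = u * |(a:ℝ) - b * (rt+1)| := by
        rw [hth2, abs_mul, abs_mul, abs_pow, abs_neg, abs_one, one_pow, one_mul,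
          abs_of_pos hupos]
      rw [h'] at h
      have h'' : u * |(a:ℝ) - b * (rt+1)| ≤ u * 1 := by rw [mul_one]; exact h
      exact le_of_mul_le_mul_left h'' hupos
    rw [abs_le] at habs
    obtain ⟨habs1, habs2⟩ := habs
    have hgt := rt_gt
    have hq1 : (0:ℤ) < q (k+1) := by exact_mod_cast q_pos (k+1)
    have hq0 : (0:ℤ) < q k := by exact_mod_cast q_pos k
    have hjlt : (j:ℤ) < 2 * q (k+1) + q k := by
      have h2' : j < 2 * q (k+1) + q k := by
        rw [show q (k+1+1) = 2 * q (k+1) + q k from rfl] at h2; exact h2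
      exact_mod_cast h2'
    have hj1 : (1:ℤ) ≤ (j:ℤ) := by exact_mod_cast h1
    rcases lt_trichotomy b 0 with hbneg | hb0 | hbpos
    · -- b ≤ -1 : contradiction
      exfalso
      have hb1 : b ≤ -1 := by omega
      have hbr : (b:ℝ) ≤ -1 := by exact_mod_cast hb1
      have hmul : (b:ℝ)*(rt+1) ≤ (-1)*(rt+1) := by
        apply mul_le_mul_of_nonneg_right hbr (by linarith)
      have ha : (a:ℝ) ≤ -1 := by linarith only [habs2, hmul, hgt]
      have ha' : a ≤ -1 := by exact_mod_cast (by exact_mod_cast ha : (a:ℝ) ≤ ((-1:ℤ):ℝ))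
      have hm1 : a * (q (k+1):ℤ) ≤ (-1) * q (k+1) := mul_le_mul_of_nonneg_right ha' (le_of_lt hq1)
      have hm2 : b * (q k:ℤ) ≤ (-1) * q k := mul_le_mul_of_nonneg_right hb1 (le_of_lt hq0)
      linarith only [hj, hj1, hm1, hm2, hq1, hq0]
    · -- b = 0 : a = 1
      rw [hb0] at hj hp habs1 habs2
      simp only [Int.cast_zero, zero_mul, add_zero, sub_zero] at hj hp habs1 habs2
      have hl : (-1:ℤ) ≤ a := by
        have : ((-1:ℤ):ℝ) ≤ (a:ℝ) := by push_cast; linarith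
        exact_mod_cast this
      have hr : a ≤ 1 := by
        have : ((a:ℤ):ℝ) ≤ ((1:ℤ):ℝ) := by push_cast; linarith
        exact_mod_cast this
      interval_cases a
      · exfalso; simp only [Int.reduceNeg, neg_mul, one_mul] at hj; omega
      · exfalso; simp only [zero_mul] at hj; omega
      · simp only [one_mul] at hj hp
        exact ⟨by exact_mod_cast hj, hp⟩
    · -- b ≥ 1 : contradiction
      exfalso
      have hb1 : (1:ℤ) ≤ b := hbpos
      have hbr : (1:ℝ) ≤ (b:ℝ) := by exact_mod_cast hb1
      have ha2 : 2 ≤ a := by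
        have hmul : (rt+1) ≤ (b:ℝ)*(rt+1) := le_mul_of_one_le_left (by linarith) hbr
        have h1' : (1:ℝ) < (a:ℝ) := by linarith only [habs1, hmul, hgt]
        have : (1:ℤ) < a := by exact_mod_cast h1'
        omega
      rcases eq_or_lt_of_le hb1 with hb1' | hb2
      · -- b = 1
        rw [← hb1'] at hj
        have hm2 : 2*(q (k+1):ℤ) ≤ a * q (k+1) := by
          apply mul_le_mul_of_nonneg_right ha2 (le_of_lt hq1)
        linarith only [hj, hjlt, hm2]
      · -- b ≥ 2
        have hb2' : (2:ℤ) ≤ b := hb2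
        have hbr2 : (2:ℝ) ≤ (b:ℝ) := by exact_mod_cast hb2'
        have ha4 : 4 ≤ a := by
          have hmul : 2*(rt+1) ≤ (b:ℝ)*(rt+1) := by
            apply mul_le_mul_of_nonneg_right hbr2 (by linarith)
          have h3' : (3:ℝ) < (a:ℝ) := by linarith only [habs1, hmul, hgt]
          have : (3:ℤ) < a := by exact_mod_cast h3'
          omega
        have hm1 : 4*(q (k+1):ℤ) ≤ a * q (k+1) := mul_le_mul_of_nonneg_right ha4 (le_of_lt hq1)
        have hm2 : 2*(q k:ℤ) ≤ b * q k := mul_le_mul_of_nonneg_right hb2' (le_of_lt hq0)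
        linarith only [hj, hjlt, hm1, hm2, hq1, hq0]


lemma floor_q (k : ℕ) : ⌊(q k : ℝ) * rt⌋ = if Even k then (pp k : ℤ) else (pp k : ℤ) - 1 := by
  have hd : (q k : ℝ) * rt = pp k + dl k := by simp only [dl]; ring
  have he := dl_eq k
  have hu0 := u_pos k
  have hu1 := u_lt_half k
  rcases Nat.even_or_odd k with hpar | hpar
  · rw [if_pos hpar, Int.floor_eq_iff, hd, he, hpar.neg_one_pow]
    push_cast
    constructor <;> nlinarith
  · rw [if_neg (Nat.not_even_iff_odd.mpr hpar), Int.floor_eq_iff, hd, he, hpar.neg_one_pow]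
    push_cast
    constructor <;> nlinarith

lemma floor_shift (k : ℕ) {j : ℕ} (h1 : 1 ≤ j) (h2 : j < q (k+1)) :
    ⌊(j:ℝ) * rt + dl k⌋ = ⌊(j:ℝ) * rt⌋ := by
  have he := dl_eq k
  have hu0 := u_pos k
  have hu1 := u_lt_half k
  set x := (j:ℝ) * rt with hx
  have hfl : (⌊x⌋ : ℝ) ≤ x := Int.floor_le x
  have hfu : x < ⌊x⌋ + 1 := Int.lt_floor_add_one x
  have hfq := floor_q k
  rcases Nat.even_or_odd k with hpar | hpar
  · -- dl k = u > 0
    have hdl : dl k = (rt-1)^(k+1) := by rw [he, hpar.neg_one_pow, one_mul]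
    rw [Int.floor_eq_iff]
    constructor
    · push_cast; nlinarith
    · by_contra hcon
      push_neg at hcon
      have hkey := key k h1 h2 (p := ⌊x⌋ + 1) (by
        rw [abs_le]; push_cast at hcon ⊢
        constructor <;> nlinarith)
      obtain ⟨hjq, hpq⟩ := hkey
      rw [if_pos hpar] at hfq
      rw [hjq] at hx
      rw [hx] at hpq
      rw [hfq] at hpq
      omega
  · -- dl k = -u < 0
    have hdl : dl k = -(rt-1)^(k+1) := by rw [he, hpar.neg_one_pow]; ring
    rw [Int.floor_eq_iff]
    constructor
    · by_contra hcon
      push_neg at hcon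
      have hkey := key k h1 h2 (p := ⌊x⌋) (by
        rw [abs_le]; push_cast at hcon ⊢
        constructor <;> nlinarith)
      obtain ⟨hjq, hpq⟩ := hkey
      rw [if_neg (Nat.not_even_iff_odd.mpr hpar)] at hfq
      rw [hjq] at hx
      rw [hx] at hpq
      rw [hfq] at hpq
      omega
    · push_cast; nlinarith

lemma floor_add (k : ℕ) {j : ℕ} (h1 : 1 ≤ j) (h2 : j < q (k+1)) :
    ⌊((q k + j : ℕ) : ℝ) * rt⌋ = (pp k : ℤ) + ⌊(j:ℝ) * rt⌋ := by
  have hd : ((q k + j : ℕ) : ℝ) * rt = ((pp k : ℤ) : ℝ) + ((j:ℝ) * rt + dl k) := by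
    simp only [dl]; push_cast; ring
  rw [hd, Int.floor_intCast_add, floor_shift k h1 h2]


-- the step of the walk
noncomputable def eps (n : ℕ) : ℤ := ((Int.negOnePow ⌊(n : ℝ) * rt⌋ : ℤˣ) : ℤ)

lemma S_succ (n : ℕ) : S rt (n+1) = S rt n + eps (n+1) := by
  unfold S eps
  rw [Finset.sum_Icc_succ_top (by omega)]

lemma S_zero : S rt 0 = 0 := by
  unfold S
  simp

lemma eps_add (k : ℕ) {j : ℕ} (h1 : 1 ≤ j) (h2 : j < q (k+1)) :
    eps (q k + j) = - eps j := by
  unfold eps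
  rw [floor_add k h1 h2, Int.negOnePow_add]
  obtain ⟨t, ht⟩ := pp_odd k
  have : (pp k : ℤ) = 2*t + 1 := by exact_mod_cast ht
  rw [this]
  have h3 : Int.negOnePow (2*(t:ℤ)+1) = -1 := Int.negOnePow_odd _ ⟨t, by ring⟩
  rw [h3]
  push_cast
  ring

lemma S_trans (k : ℕ) : ∀ m, m < q (k+1) → S rt (q k + m) = S rt (q k) - S rt m := by
  intro m
  induction m with
  | zero => intro _; simp [S_zero]
  | succ m ih =>
    intro hm
    have hm' : m < q (k+1) := by omega
    have e1 : q k + (m+1) = (q k + m) + 1 := by omega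
    rw [e1, S_succ, ih hm', S_succ, ← e1, eps_add k (by omega) hm]
    ring

lemma floor_one_rt : ⌊(1:ℝ) * rt⌋ = 1 := by
  rw [Int.floor_eq_iff]
  refine ⟨by push_cast; nlinarith [rt_gt, rt_lt], by push_cast; nlinarith [rt_gt, rt_lt]⟩

lemma floor_two_rt : ⌊(2:ℝ) * rt⌋ = 2 := by
  rw [Int.floor_eq_iff]
  refine ⟨by push_cast; nlinarith [rt_gt, rt_lt], by push_cast; nlinarith [rt_gt, rt_lt]⟩

lemma S_one : S rt 1 = -1 := by
  have h := S_succ 0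
  rw [S_zero] at h
  rw [h]
  unfold eps
  push_cast
  rw [floor_one_rt]
  simp [Int.negOnePow_odd 1 (⟨0, by ring⟩ : Odd (1:ℤ))]

lemma S_two : S rt 2 = 0 := by
  have h := S_succ 1
  rw [S_one] at h
  rw [h]
  unfold eps
  push_cast
  rw [floor_two_rt]
  simp [Int.negOnePow_even 2 (⟨1, by ring⟩ : Even (2:ℤ))]

/-- S at Pell points: -1 for even k, 0 for odd k -/
lemma S_q (k : ℕ) : S rt (q k) = if Even k then -1 else 0 := by
  induction k using Nat.twoStepInduction with
  | zero => simpa [q] using S_one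
  | one => simpa [q] using S_two
  | more k ih1 ih2 =>
    have h1 : q (k+2) = q (k+1) + (q (k+1) + q k) := by
      show 2 * q (k+1) + q k = _; ring
    have h2 : q (k+1) + q k < q (k+2) := by
      have := q_pos (k+1); have := q_pos k; have := q_lt_succ k
      show _ < 2 * q (k+1) + q k
      omega
    have h3 : q k < q (k+2) := by
      have := q_lt_succ k; have := q_lt_succ (k+1); omega
    have e1 : S rt (q (k+2)) = S rt (q (k+1)) - S rt (q (k+1) + q k) := by
      rw [h1]; exact S_trans (k+1) _ h2
    have e2 : S rt (q (k+1) + q k) = S rt (q (k+1)) - S rt (q k) := S_trans (k+1) _ h3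
    rw [e1, e2, ih1]
    rcases Nat.even_or_odd k with hpar | hpar
    · rw [if_pos hpar, if_pos (by simpa [Nat.even_add] using hpar)]
      ring
    · rw [if_neg (Nat.not_even_iff_odd.mpr hpar),
        if_neg (by rw [Nat.even_add_one, Nat.even_add_one]; simpa [Nat.not_even_iff_odd] using hpar)]
      ring

/-- record positions -/
def rho : ℕ → ℕ
  | 0 => 0
  | (n+1) => q n + rho n

/-- record values -/
def v (n : ℕ) : ℤ := (-1)^n * ((n+1)/2 : ℕ)

lemma two_q_le (n : ℕ) : 2 * q n ≤ q (n+1) := by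
  rcases n with _ | m
  · simp [q]
  · show 2 * q (m+1) ≤ 2 * q (m+1) + q m
    have := q_pos m
    omega

lemma rho_lt_q (n : ℕ) : rho n < q n := by
  induction n with
  | zero => simp [rho, q]
  | succ n ih =>
    show q n + rho n < q (n+1)
    have := two_q_le n
    omega

lemma q_le_rho (n : ℕ) : q n ≤ rho (n+1) := Nat.le_add_right _ _

/-- main invariant -/
theorem main (n : ℕ) (hn : 1 ≤ n) :
    (∀ m, m < rho (n+1) → -(((n+1)/2 : ℕ) : ℤ) ≤ S rt m ∧ S rt m ≤ ((n/2 : ℕ) : ℤ))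
    ∧ S rt (rho n) = v n := by
  induction n, hn using Nat.le_induction with
  | base =>
    constructor
    · intro m hm
      have : rho 2 = 3 := by simp [rho, q]
      rw [this] at hm
      interval_cases m <;> simp [S_zero, S_one, S_two]
    · simpa [rho, q, v] using S_one
  | succ n hn ih =>
    obtain ⟨ihB, ihV⟩ := ih
    obtain ⟨nn, rfl⟩ : ∃ nn, n = nn + 1 := ⟨n - 1, by omega⟩
    set n := nn + 1 with hnn
    have hq_rec : q (n+1) = 2 * q n + q nn := rfl
    have hqpos0 := q_pos nn
    have hqpos1 := q_pos n
    have hqpos2 := q_pos (n+1)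
    have hql1 := q_lt_succ n
    have hql0 := q_lt_succ nn
    have hrho2 : rho (n+1+1) = q (n+1) + rho (n+1) := rfl
    have hrho1 : rho (n+1) = q n + rho n := rfl
    have hrho0 : rho n = q nn + rho nn := rfl
    have hrholt := rho_lt_q (n+1)
    have hrholt' := rho_lt_q n
    have hSq1 := S_q n
    have hSq2 := S_q (n+1)
    -- value at the new record
    have hV : S rt (rho (n+1)) = v (n+1) := by
      have h1 : S rt (rho (n+1)) = S rt (q n) - S rt (rho n) := by
        rw [hrho1]
        exact S_trans n (rho n) (by omega)
      rw [h1, ihV, hSq1]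
      rcases Nat.even_or_odd n with hpar | hpar
      · rw [if_pos hpar]
        obtain ⟨t, ht⟩ := hpar
        unfold v
        rw [Even.neg_one_pow (⟨t, by omega⟩ : Even n)]
        rw [Odd.neg_one_pow (⟨t, by omega⟩ : Odd (n+1))]
        have e1 : ((n+1)/2 : ℕ) = t := by omega
        have e2 : ((n+1+1)/2 : ℕ) = t+1 := by omega
        rw [e1, e2]
        push_cast
        ring
      · rw [if_neg (Nat.not_even_iff_odd.mpr hpar)]
        obtain ⟨t, ht⟩ := hpar
        unfold v
        rw [(Odd.neg_one_pow (⟨t, by omega⟩ : Odd n) : ((-1:ℤ))^n = -1)]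
        rw [(Even.neg_one_pow (⟨t+1, by omega⟩ : Even (n+1)) : ((-1:ℤ))^(n+1) = 1)]
        have e1 : ((n+1)/2 : ℕ) = t+1 := by omega
        have e2 : ((n+1+1)/2 : ℕ) = t+1 := by omega
        rw [e1, e2]
        push_cast
        ring
    refine ⟨?_, hV⟩
    intro m hm
    rcases lt_or_ge m (rho (n+1)) with hcase | hcase
    · -- old range
      have := ihB m hcase
      have e1 : ((n+1)/2 : ℕ) ≤ ((n+1+1)/2 : ℕ) := by omega
      have e2 : (n/2 : ℕ) ≤ ((n+1)/2 : ℕ) := by omega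
      constructor
      · have : -((((n+1)/2 : ℕ)):ℤ) ≤ S rt m := this.1
        have ee : ((((n+1)/2 : ℕ)):ℤ) ≤ ((((n+1+1)/2 : ℕ)):ℤ) := by exact_mod_cast e1
        omega
      · have : S rt m ≤ (((n/2 : ℕ)):ℤ) := this.2
        have ee : (((n/2 : ℕ)):ℤ) ≤ ((((n+1)/2 : ℕ)):ℤ) := by exact_mod_cast e2
        omega
    · rcases lt_or_ge m (q (n+1)) with hcase2 | hcase2
      · -- middle range : m = q n + m'
        have hqn_le : q n ≤ m := by omega
        obtain ⟨m', rfl⟩ : ∃ m', m = q n + m' := ⟨m - q n, by omega⟩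
        have hm'lt : m' < q (n+1) := by omega
        have hm'rho : m' < rho (n+1) := by omega
        have hS : S rt (q n + m') = S rt (q n) - S rt m' := S_trans n m' hm'lt
        have hb := ihB m' hm'rho
        rw [hS, hSq1]
        rcases Nat.even_or_odd n with hpar | hpar
        · rw [if_pos hpar]
          obtain ⟨t, ht⟩ := hpar
          have e1 : ((n+1)/2 : ℕ) = t := by omega
          have e2 : (n/2 : ℕ) = t := by omega
          have e3 : ((n+1+1)/2 : ℕ) = t+1 := by omega
          rw [e1, e3]
          rw [e1, e2] at hb
          push_cast at hb ⊢
          omega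
        · rw [if_neg (Nat.not_even_iff_odd.mpr hpar)]
          obtain ⟨t, ht⟩ := hpar
          have e1 : ((n+1)/2 : ℕ) = t+1 := by omega
          have e2 : (n/2 : ℕ) = t := by omega
          have e3 : ((n+1+1)/2 : ℕ) = t+1 := by omega
          rw [e1, e3]
          rw [e1, e2] at hb
          push_cast at hb ⊢
          omega
      · -- top range : m = q (n+1) + m'
        obtain ⟨m', rfl⟩ : ∃ m', m = q (n+1) + m' := ⟨m - q (n+1), by omega⟩
        have hm'rho : m' < rho (n+1) := by omega
        have hm'lt : m' < q (n+1+1) := by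
          have : rho (n+1) < q (n+1) := hrholt
          have := q_lt_succ (n+1)
          omega
        have hS : S rt (q (n+1) + m') = S rt (q (n+1)) - S rt m' := S_trans (n+1) m' hm'lt
        have hb := ihB m' hm'rho
        rw [hS, hSq2]
        rcases Nat.even_or_odd n with hpar | hpar
        · have hodd : ¬ Even (n+1) := by
            rw [Nat.even_add_one]; simpa using hpar
          rw [if_neg hodd]
          obtain ⟨t, ht⟩ := hpar
          have e1 : ((n+1)/2 : ℕ) = t := by omega
          have e2 : (n/2 : ℕ) = t := by omega
          have e3 : ((n+1+1)/2 : ℕ) = t+1 := by omega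
          rw [e1, e3]
          rw [e1, e2] at hb
          push_cast at hb ⊢
          omega
        · have heven : Even (n+1) := by
            rw [Nat.even_add_one]; simp [Nat.not_even_iff_odd]; exact hpar
          rw [if_pos heven]
          obtain ⟨t, ht⟩ := hpar
          have e1 : ((n+1)/2 : ℕ) = t+1 := by omega
          have e2 : (n/2 : ℕ) = t := by omega
          have e3 : ((n+1+1)/2 : ℕ) = t+1 := by omega
          rw [e1, e3]
          rw [e1, e2] at hb
          push_cast at hb ⊢
          omega


lemma rho_one : rho 1 = 1 := by simp [rho, q]

lemma rho_strictMono : StrictMono rho := by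
  apply strictMono_nat_of_lt_succ
  intro n
  show rho n < q n + rho n
  have := q_pos n
  omega

lemma S_rho (n : ℕ) : S rt (rho n) = v n := by
  rcases Nat.eq_zero_or_pos n with rfl | hn
  · simpa [rho, v] using S_zero
  · exact (main n hn).2

lemma v_outside (n : ℕ) (hn : 1 ≤ n) (m : ℕ) (hm : m < rho (n+1)) :
    S rt m ≠ v (n+1) := by
  obtain ⟨hb, _⟩ := main n hn
  obtain ⟨h1, h2⟩ := hb m hm
  intro hcon
  rcases Nat.even_or_odd n with ⟨t, ht⟩ | ⟨t, ht⟩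
  · have hv : v (n+1) = -((t:ℤ)+1) := by
      unfold v
      rw [Odd.neg_one_pow (⟨t, by omega⟩ : Odd (n+1))]
      have e : ((n+1+1)/2 : ℕ) = t+1 := by omega
      rw [e]; push_cast; ring
    have e1 : ((n+1)/2 : ℕ) = t := by omega
    rw [e1] at h1
    rw [hcon, hv] at h1
    omega
  · have hv : v (n+1) = (t:ℤ)+1 := by
      unfold v
      rw [Even.neg_one_pow (⟨t+1, by omega⟩ : Even (n+1))]
      have e : ((n+1+1)/2 : ℕ) = t+1 := by omega
      rw [e]; push_cast; ring
    have e2 : (n/2 : ℕ) = t := by omega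
    rw [e2] at h2
    rw [hcon, hv] at h2
    omega

lemma record_rho (n : ℕ) : IsRecord rt (rho n) := by
  intro m hm
  rcases n with _ | k
  · simp [rho] at hm
  rcases k with _ | k
  · rw [rho_one] at hm
    interval_cases m
    rw [S_zero, S_rho, show v 1 = -1 by simp [v]]
    omega
  · rw [S_rho]
    exact v_outside (k+1) (by omega) m hm

lemma attain (n : ℕ) (hn : 1 ≤ n) (t : ℤ)
    (h1 : -(((n+1)/2 : ℕ) : ℤ) ≤ t) (h2 : t ≤ ((n/2 : ℕ) : ℤ)) :
    ∃ m, m ≤ rho n ∧ S rt m = t := by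
  induction n, hn using Nat.le_induction with
  | base =>
    simp only [show ((1+1)/2 : ℕ) = 1 from rfl, show ((1:ℕ)/2 : ℕ) = 0 from rfl] at h1 h2
    push_cast at h1 h2
    rcases (by omega : t = 0 ∨ t = -1) with rfl | rfl
    · exact ⟨0, by simp, S_zero⟩
    · exact ⟨1, by rw [rho_one], S_one⟩
  | succ n hn ih =>
    rcases Nat.even_or_odd n with ⟨k, hk⟩ | ⟨k, hk⟩
    · -- n = 2k even : old range [-k, k], new [-k-1, k]
      have e1 : ((n+1)/2 : ℕ) = k := by omega
      have e2 : (n/2 : ℕ) = k := by omega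
      have e3 : ((n+1+1)/2 : ℕ) = k+1 := by omega
      rw [e3] at h1; rw [e1] at h2
      rcases eq_or_lt_of_le h1 with heq | hlt
      · refine ⟨rho (n+1), le_refl _, ?_⟩
        rw [S_rho]
        unfold v
        rw [Odd.neg_one_pow (⟨k, by omega⟩ : Odd (n+1)), e3]
        push_cast
        omega
      · obtain ⟨m, hm1, hm2⟩ := ih (by rw [e1]; push_cast; omega) (by rw [e2]; push_cast; omega)
        exact ⟨m, le_trans hm1 (le_of_lt (rho_strictMono (by omega))), hm2⟩
    · -- n = 2k+1 odd : old range [-k-1, k], new [-k-1, k+1]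
      have e1 : ((n+1)/2 : ℕ) = k+1 := by omega
      have e2 : (n/2 : ℕ) = k := by omega
      have e3 : ((n+1+1)/2 : ℕ) = k+1 := by omega
      rw [e3] at h1; rw [e1] at h2
      rcases eq_or_lt_of_le h2 with heq | hlt
      · refine ⟨rho (n+1), le_refl _, ?_⟩
        rw [S_rho]
        unfold v
        rw [Even.neg_one_pow (⟨k+1, by omega⟩ : Even (n+1)), e3]
        push_cast
        omega
      · obtain ⟨m, hm1, hm2⟩ := ih (by rw [e1]; push_cast; omega) (by rw [e2]; push_cast; omega)
        exact ⟨m, le_trans hm1 (le_of_lt (rho_strictMono (by omega))), hm2⟩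

lemma localize (r : ℕ) :
    (∃ n, r = rho n) ∨ (∃ n, 1 ≤ n ∧ rho n < r ∧ r < rho (n+1)) := by
  induction r with
  | zero => exact Or.inl ⟨0, rfl⟩
  | succ r ih =>
    by_cases hr : ∃ n, r + 1 = rho n
    · exact Or.inl hr
    · right
      rcases ih with ⟨n, rfl⟩ | ⟨n, hn1, hn2, hn3⟩
      · -- r = rho n ; r+1 < rho (n+1) since not equal
        have hlt : rho n + 1 ≤ rho (n+1) := rho_strictMono (by omega)
        have hne : rho n + 1 ≠ rho (n+1) := fun hc => hr ⟨n+1, hc⟩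
        rcases Nat.eq_zero_or_pos n with rfl | hn
        · -- rho 0 = 0, rho 1 = 1, so r+1 = 1 = rho 1, contradiction with hne
          exfalso
          exact hr ⟨1, by rw [rho_one]; simp [rho]⟩
        · exact ⟨n, hn, by omega, by omega⟩
      · have hlt : r + 1 ≤ rho (n+1) := hn3
        have hne : r + 1 ≠ rho (n+1) := fun hc => hr ⟨n+1, hc⟩
        exact ⟨n, hn1, by omega, by omega⟩

lemma record_iff (r : ℕ) : IsRecord rt r ↔ ∃ n, r = rho n := by
  constructor
  · intro hrec
    rcases localize r with h | ⟨n, hn1, hn2, hn3⟩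
    · exact h
    · exfalso
      obtain ⟨hb, _⟩ := main n hn1
      obtain ⟨h1, h2⟩ := hb r hn3
      obtain ⟨m, hm1, hm2⟩ := attain n hn1 (S rt r) h1 h2
      exact hrec m (by omega) hm2
  · rintro ⟨n, rfl⟩
    exact record_rho n

lemma R_eq_rho (n : ℕ) : R n = rho n := by
  classical
  have hc : Nat.count (IsRecord rt) (rho n) = n := by
    rw [Nat.count_eq_card_filter_range]
    have himg : (Finset.range (rho n)).filter (fun x => IsRecord rt x)
        = (Finset.range n).image rho := by
      ext x
      simp only [Finset.mem_filter, Finset.mem_range, Finset.mem_image]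
      constructor
      · rintro ⟨hx, hrec⟩
        obtain ⟨i, rfl⟩ := (record_iff x).mp hrec
        refine ⟨i, ?_, rfl⟩
        by_contra hcon
        push_neg at hcon
        exact absurd (rho_strictMono.le_iff_le.mpr hcon) (by omega)
      · rintro ⟨i, hi, rfl⟩
        exact ⟨rho_strictMono (by omega), record_rho i⟩
    rw [himg, Finset.card_image_of_injective _ rho_strictMono.injective, Finset.card_range]
  have h := Nat.nth_count (p := IsRecord rt) (n := rho n) (record_rho n)
  rw [hc] at h
  exact h


lemma q_rho (n : ℕ) : q (n+1) = rho (n+1) + rho n + 1 := by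
  induction n with
  | zero => simp [q, rho]
  | succ n ih =>
    have h1 : q (n+1+1) = 2 * q (n+1) + q n := rfl
    have h2 : rho (n+1+1) = q (n+1) + rho (n+1) := rfl
    have h3 : rho (n+1) = q n + rho n := rfl
    omega


end Stmt4Aux

open Stmt4Aux in
theorem stmt_4 :
    R 0 = 0 ∧ R 1 = 1 ∧
    (∀ n : ℕ, 1 ≤ n → R (n + 1) = 2 * R n + R (n - 1) + 1) ∧
    (∀ n : ℕ, 1 ≤ n → 0 < (-1 : ℤ) ^ n * S (Real.sqrt 2) (R n)) := by
  refine ⟨?_, ?_, ?_, ?_⟩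
  · rw [R_eq_rho]; rfl
  · rw [R_eq_rho]; simp [rho, q]
  · intro n hn
    obtain ⟨m, rfl⟩ : ∃ m, n = m + 1 := ⟨n - 1, by omega⟩
    rw [R_eq_rho, R_eq_rho, R_eq_rho]
    have h := q_rho m
    have h2 : rho (m+1+1) = q (m+1) + rho (m+1) := rfl
    have h3 : rho (m+1) = q m + rho m := rfl
    have h4 : q (m+1) = rho (m+1) + rho m + 1 := q_rho m
    simp only [Nat.add_sub_cancel]
    omega
  · intro n hn
    rw [R_eq_rho, S_rho]
    unfold v
    have he : ((-1:ℤ))^n * ((-1:ℤ))^n = 1 := by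
      rw [← pow_add]; exact Even.neg_one_pow ⟨n, rfl⟩
    rw [← mul_assoc, he, one_mul]
    have : 1 ≤ ((n+1)/2 : ℕ) := by omega
    exact_mod_cast this
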